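/- arXiv:2507.11455 — 3 statements merged into one kernel-verified Lean document; each statement's English description precedes it below -/
import Mathlib

section
/- Let (X, μ) be a measure space and F a family of nonnegative functions in L¹(X, μ). Suppose there is a constant K < ∞ such that for every finite subset {f₁, …, f_k} ⊆ F one has ∫_X max{f₁, …, f_k} dμ ≤ K. Then there exists a function w ∈ L¹(X, μ) such that for every f ∈ F, f ≤ w μ-almost everywhere. -/
open MeasureTheory

private lemma ciSup_dite_max {k l : ℕ} (a : Fin (k + 1) → ℝ) (b : Fin (l + 1) → ℝ) :
    (⨆ i : Fin (k + l + 1 + 1),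
        (if h : (i : ℕ) < k + 1 then a ⟨i, h⟩
         else b ⟨(i : ℕ) - (k + 1), by omega⟩)) = max (⨆ i, a i) (⨆ i, b i) := by
  apply le_antisymm
  · apply ciSup_le
    intro i
    by_cases h : (i : ℕ) < k + 1
    · simp only [h, dif_pos]
      exact le_max_of_le_left (le_ciSup (Set.Finite.bddAbove (Set.finite_range a)) _)
    · simp only [h, dif_neg]
      exact le_max_of_le_right (le_ciSup (Set.Finite.bddAbove (Set.finite_range b)) _)
  · apply max_le
    · apply ciSup_le
      intro j
      have hb : BddAbove (Set.range fun i : Fin (k + l + 1 + 1) =>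
          (if h : (i : ℕ) < k + 1 then a ⟨i, h⟩
           else b ⟨(i : ℕ) - (k + 1), by omega⟩)) :=
        Set.Finite.bddAbove (Set.finite_range _)
      have := le_ciSup hb (⟨(j : ℕ), by omega⟩ : Fin (k + l + 1 + 1))
      simpa [j.isLt] using this
    · apply ciSup_le
      intro j
      have hb : BddAbove (Set.range fun i : Fin (k + l + 1 + 1) =>
          (if h : (i : ℕ) < k + 1 then a ⟨i, h⟩
           else b ⟨(i : ℕ) - (k + 1), by omega⟩)) :=
        Set.Finite.bddAbove (Set.finite_range _)
      have := le_ciSup hb (⟨k + 1 + (j : ℕ), by omega⟩ : Fin (k + l + 1 + 1))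
      have hlt : ¬ (k + 1 + (j : ℕ) < k + 1) := by omega
      simpa [hlt, Nat.add_sub_cancel_left] using this

theorem o_bounded_of_finite_max_bounds {X : Type*} [MeasurableSpace X] (μ : Measure X)
    (F : Set (X → ℝ)) (hpos : ∀ f ∈ F, ∀ x, 0 ≤ f x) (hint : ∀ f ∈ F, Integrable f μ)
    (K : ℝ)
    (hK : ∀ (k : ℕ) (φ : Fin (k + 1) → (X → ℝ)), (∀ i, φ i ∈ F) →
      ∫ x, (⨆ i, φ i x) ∂μ ≤ K) :
    ∃ w : X → ℝ, Integrable w μ ∧ ∀ f ∈ F, ∀ᵐ x ∂μ, f x ≤ w x := by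
  classical
  rcases F.eq_empty_or_nonempty with rfl | ⟨f₀, hf₀⟩
  · exact ⟨0, integrable_zero _ _ _, by simp⟩
  -- The family of finite maxima of elements of F
  set G : Set (X → ℝ) := {g | ∃ k, ∃ φ : Fin (k + 1) → X → ℝ,
      (∀ i, φ i ∈ F) ∧ g = fun x => ⨆ i, φ i x} with hGdef
  have hFG : ∀ f ∈ F, f ∈ G := by
    intro f hf
    exact ⟨0, fun _ => f, fun _ => hf, by funext x; exact (ciSup_const).symm⟩
  have hGint : ∀ g ∈ G, Integrable g μ := by
    rintro g ⟨k, φ, hφ, rfl⟩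
    have : (fun x => ⨆ i, φ i x) = Finset.univ.sup' Finset.univ_nonempty φ := by
      funext x
      rw [Finset.sup'_apply, Finset.sup'_univ_eq_ciSup]
    rw [this]
    exact Finset.sup'_induction (p := fun g => Integrable g μ) _ _ (fun a ha b hb => Integrable.sup ha hb) (fun i _ => hint _ (hφ i))
  have hGpos : ∀ g ∈ G, ∀ x, 0 ≤ g x := by
    rintro g ⟨k, φ, hφ, rfl⟩ x
    exact le_trans (hpos _ (hφ 0) x)
      (le_ciSup (f := fun i => φ i x) (Set.Finite.bddAbove (Set.finite_range _)) 0)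
  have hGK : ∀ g ∈ G, ∫ x, g x ∂μ ≤ K := by
    rintro g ⟨k, φ, hφ, rfl⟩
    exact hK k φ hφ
  have hGmax : ∀ g₁ ∈ G, ∀ g₂ ∈ G, (fun x => max (g₁ x) (g₂ x)) ∈ G := by
    rintro g₁ ⟨k, φ, hφ, rfl⟩ g₂ ⟨l, ψ, hψ, rfl⟩
    refine ⟨k + l + 1, fun i => if h : (i : ℕ) < k + 1 then φ ⟨i, h⟩
      else ψ ⟨(i : ℕ) - (k + 1), by omega⟩, ?_, ?_⟩
    · intro i
      by_cases h : (i : ℕ) < k + 1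
      · simp only [h, dif_pos]; exact hφ _
      · simp only [h, dif_neg]; exact hψ _
    · funext x
      have := ciSup_dite_max (fun i => φ i x) (fun i => ψ i x)
      simp only [← this]
      congr 1
      funext i
      by_cases h : (i : ℕ) < k + 1 <;> simp [h]
  -- The supremum of integrals over G
  set T : Set ℝ := (fun g => ∫ x, g x ∂μ) '' G with hTdef
  have hTne : T.Nonempty := ⟨_, ⟨f₀, hFG f₀ hf₀, rfl⟩⟩
  have hTbdd : BddAbove T := ⟨K, by rintro r ⟨g, hg, rfl⟩; exact hGK g hg⟩
  set S : ℝ := sSup T with hSdef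
  have hSmem : ∀ g ∈ G, ∫ x, g x ∂μ ≤ S := fun g hg => le_csSup hTbdd ⟨g, hg, rfl⟩
  -- choose an approximating sequence
  have hselect : ∀ n : ℕ, ∃ g, g ∈ G ∧ S - 1 / (n + 1) < ∫ x, g x ∂μ := by
    intro n
    have h1 : S - 1 / ((n : ℝ) + 1) < S := by
      have : (0 : ℝ) < 1 / ((n : ℝ) + 1) := by positivity
      linarith
    obtain ⟨r, hrT, hr⟩ := exists_lt_of_lt_csSup hTne h1
    obtain ⟨g, hg, rfl⟩ := hrT
    exact ⟨g, hg, hr⟩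
  choose h hhG hhS using hselect
  -- cumulative maxima
  let g : ℕ → X → ℝ := fun n => Nat.rec (h 0)
    (fun n gn => fun x => max (gn x) (h (n + 1) x)) n
  have hg0 : g 0 = h 0 := rfl
  have hgsucc : ∀ n, g (n + 1) = fun x => max (g n x) (h (n + 1) x) := fun n => rfl
  have hgG : ∀ n, g n ∈ G := by
    intro n
    induction n with
    | zero => exact hhG 0
    | succ n ih => exact hGmax _ ih _ (hhG (n + 1))
  have hgmono : ∀ n x, g n x ≤ g (n + 1) x := by
    intro n x
    rw [hgsucc]
    exact le_max_left _ _
  have hgmono' : ∀ x, Monotone fun n => g n x := fun x =>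
    monotone_nat_of_le_succ (fun n => hgmono n x)
  have hgh : ∀ n x, h n x ≤ g n x := by
    intro n x
    cases n with
    | zero => exact le_refl _
    | succ n => rw [hgsucc]; exact le_max_right _ _
  -- the integrals of g n tend to S
  have hIg_le : ∀ n, ∫ x, g n x ∂μ ≤ S := fun n => hSmem _ (hgG n)
  have hIg_lt : ∀ n, S - 1 / (n + 1) < ∫ x, g n x ∂μ := by
    intro n
    exact lt_of_lt_of_le (hhS n) (integral_mono (hGint _ (hhG n)) (hGint _ (hgG n))
      (fun x => hgh n x))
  have hIg_tendsto : Filter.Tendsto (fun n => ∫ x, g n x ∂μ) Filter.atTop (nhds S) := by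
    have hlo : Filter.Tendsto (fun n : ℕ => S - 1 / ((n : ℝ) + 1)) Filter.atTop (nhds S) := by
      have := tendsto_one_div_add_atTop_nhds_zero_nat (𝕜 := ℝ)
      have := (tendsto_const_nhds (x := S) (f := Filter.atTop (α := ℕ))).sub this
      simpa using this
    exact tendsto_of_tendsto_of_tendsto_of_le_of_le hlo tendsto_const_nhds
      (fun n => le_of_lt (hIg_lt n)) (fun n => hIg_le n)
  -- move to ENNReal
  set Gn : ℕ → X → ENNReal := fun n x => ENNReal.ofReal (g n x) with hGndef
  have hGnmeas : ∀ n, AEMeasurable (Gn n) μ := fun n =>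
    ENNReal.measurable_ofReal.comp_aemeasurable (hGint _ (hgG n)).aestronglyMeasurable.aemeasurable
  have hGnmono : ∀ x, Monotone fun n => Gn n x := fun x n m hnm =>
    ENNReal.ofReal_le_ofReal (hgmono' x hnm)
  have hGnint : ∀ n, ∫⁻ x, Gn n x ∂μ = ENNReal.ofReal (∫ x, g n x ∂μ) := by
    intro n
    rw [← ofReal_integral_eq_lintegral_ofReal (hGint _ (hgG n))
      (Filter.Eventually.of_forall (hGpos _ (hgG n)))]
  set W : X → ENNReal := fun x => ⨆ n, Gn n x with hWdef
  have hWmeas : AEMeasurable W μ := AEMeasurable.iSup hGnmeas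
  have hWlint : ∫⁻ x, W x ∂μ = ENNReal.ofReal S := by
    rw [hWdef]
    rw [lintegral_iSup' hGnmeas (Filter.Eventually.of_forall hGnmono)]
    have h1 : Filter.Tendsto (fun n => ∫⁻ x, Gn n x ∂μ) Filter.atTop
        (nhds (ENNReal.ofReal S)) := by
      simp only [hGnint]
      exact (ENNReal.continuous_ofReal.tendsto S).comp hIg_tendsto
    have h2 : Monotone fun n => ∫⁻ x, Gn n x ∂μ := by
      intro n m hnm
      exact lintegral_mono (fun x => hGnmono x hnm)
    exact tendsto_nhds_unique (tendsto_atTop_iSup h2) h1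
  have hWfin : ∀ᵐ x ∂μ, W x < ⊤ := by
    refine ae_lt_top' hWmeas ?_
    rw [hWlint]
    exact ENNReal.ofReal_ne_top
  refine ⟨fun x => (W x).toReal, ?_, ?_⟩
  · exact integrable_toReal_of_lintegral_ne_top hWmeas (by rw [hWlint]; exact ENNReal.ofReal_ne_top)
  · intro f hf
    -- show ENNReal.ofReal (f x) ≤ W x a.e.
    have hmaxG : ∀ n, (fun x => max (f x) (g n x)) ∈ G := fun n =>
      hGmax f (hFG f hf) (g n) (hgG n)
    have hmaxlint : ∀ n, ∫⁻ x, (ENNReal.ofReal (f x) ⊔ Gn n x) ∂μ ≤ ENNReal.ofReal S := by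
      intro n
      have heq : (fun x => ENNReal.ofReal (f x) ⊔ Gn n x)
          = fun x => ENNReal.ofReal (max (f x) (g n x)) := by
        funext x
        exact (Monotone.map_max (f := ENNReal.ofReal) (fun a b hab =>
          ENNReal.ofReal_le_ofReal hab)).symm
      rw [heq, ← ofReal_integral_eq_lintegral_ofReal (hGint _ (hmaxG n))
        (Filter.Eventually.of_forall (hGpos _ (hmaxG n)))]
      exact ENNReal.ofReal_le_ofReal (hSmem _ (hmaxG n))
    have hMeas : ∀ n, AEMeasurable (fun x => ENNReal.ofReal (f x) ⊔ Gn n x) μ := fun n =>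
      (ENNReal.measurable_ofReal.comp_aemeasurable
        (hint f hf).aestronglyMeasurable.aemeasurable).sup (hGnmeas n)
    have hsuplint : ∫⁻ x, (ENNReal.ofReal (f x) ⊔ W x) ∂μ ≤ ENNReal.ofReal S := by
      have heq : (fun x => ENNReal.ofReal (f x) ⊔ W x)
          = fun x => ⨆ n, (ENNReal.ofReal (f x) ⊔ Gn n x) := by
        funext x
        rw [hWdef]
        exact sup_iSup
      rw [heq, lintegral_iSup' hMeas (Filter.Eventually.of_forall
        (fun x n m hnm => sup_le_sup_left (hGnmono x hnm) _))]
      exact iSup_le hmaxlint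
    have hae : W =ᵐ[μ] fun x => ENNReal.ofReal (f x) ⊔ W x := by
      refine ae_eq_of_ae_le_of_lintegral_le
        (Filter.Eventually.of_forall (fun x => le_sup_right)) ?_
        ((ENNReal.measurable_ofReal.comp_aemeasurable
          (hint f hf).aestronglyMeasurable.aemeasurable).sup hWmeas) ?_
      · rw [hWlint]; exact ENNReal.ofReal_ne_top
      · rw [hWlint]; exact hsuplint
    filter_upwards [hae, hWfin] with x hx hx'
    have hle : ENNReal.ofReal (f x) ≤ W x := by
      rw [hx]; exact le_sup_left
    calc f x = (ENNReal.ofReal (f x)).toReal := (ENNReal.toReal_ofReal (hpos f hf x)).symm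
      _ ≤ (W x).toReal := ENNReal.toReal_mono hx'.ne hle
end

section
/- Let (Y, Σ, ν) be a measure space, (X, μ) a measure space, φ : X → Y a map such that preimages of measurable sets are measurable, and let G : X → [0, ∞] be measurable. Let q < p be positive reals and σ defined by 1/σ = 1/q − 1/p. Define, for B ∈ Σ, Ψ(B) = sup over measurable u-data of (∫_{φ^{-1}(B)} G_u dμ)^{σ/q}, where each G_u : X → [0,∞] is measurable. Then if for a countable disjoint family (B_j) ⊆ Σ one has ∫_{φ^{-1}(B_j)} G_u dμ ≤ Ψ(B_j)^{q/σ} · (∫_{B_j} H_u dν)^{q/p} for all u and j, with ∑_j ∫_{B_j} H_u dν = ∫_{⋃B_j} H_u dν, it follows that Ψ(⋃_j B_j) ≤ ∑_j Ψ(B_j) whenever the normalization ∫_{⋃B_j} H_u dν ≤ 1 defines the supremum. -/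
open MeasureTheory ENNReal

/-- Countable subadditivity of the set function `Ψ` associated to a composition
operator, on disjoint measurable families. -/
theorem Psi_countably_subadditive {X Y : Type*} [MeasurableSpace X] [MeasurableSpace Y]
    (μ : Measure X) (ν : Measure Y) (φ : X → Y)
    (hφ : ∀ S : Set Y, MeasurableSet S → MeasurableSet (φ ⁻¹' S))
    {ι : Type*} (G : ι → X → ℝ≥0∞) (H : ι → Y → ℝ≥0∞)
    (hG : ∀ u, Measurable (G u)) (hH : ∀ u, Measurable (H u))
    (q p σ : ℝ) (hq : 0 < q) (hqp : q < p) (hσ : 1 / σ = 1 / q - 1 / p)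
    (Ψ : Set Y → ℝ≥0∞)
    (B : ℕ → Set Y) (hB : ∀ j, MeasurableSet (B j))
    (hdisj : Pairwise (Function.onFun Disjoint B))
    -- the value of Ψ on the union is defined by the supremum under the
    -- normalization ∫_{⋃ B_j} H_u dν ≤ 1
    (hΨunion : Ψ (⋃ j, B j) =
      ⨆ (u : ι) (_ : ∫⁻ y in ⋃ j, B j, H u y ∂ν ≤ 1),
        (∫⁻ x in φ ⁻¹' (⋃ j, B j), G u x ∂μ) ^ (σ / q))
    (hbound : ∀ (u : ι) (j : ℕ),
      ∫⁻ x in φ ⁻¹' (B j), G u x ∂μ ≤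
        (Ψ (B j)) ^ (q / σ) * (∫⁻ y in B j, H u y ∂ν) ^ (q / p))
    (hadd : ∀ u : ι, ∑' j, ∫⁻ y in B j, H u y ∂ν = ∫⁻ y in ⋃ j, B j, H u y ∂ν) :
    Ψ (⋃ j, B j) ≤ ∑' j, Ψ (B j) := by
  have hp : 0 < p := hq.trans hqp
  have hσ0 : 0 < σ := by
    have h1 : (0 : ℝ) < 1 / σ := by
      rw [hσ]
      have := one_div_lt_one_div_of_lt hq hqp
      linarith
    exact one_div_pos.mp h1
  have hqσ : q < σ := by
    have h1 : 1 / σ < 1 / q := by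
      rw [hσ]
      have : 0 < 1 / p := one_div_pos.mpr hp
      linarith
    by_contra hle
    push_neg at hle
    have : 1 / q ≤ 1 / σ := one_div_le_one_div_of_le hσ0 hle
    linarith
  have hconj : (σ / q).HolderConjugate (p / q) := by
    rw [Real.holderConjugate_iff]
    constructor
    · exact (one_lt_div hq).mpr hqσ
    · have h2 : 1 / σ + 1 / p = 1 / q := by linarith
      have h3 : q / σ + q / p = q * (1 / σ + 1 / p) := by ring
      rw [← one_div, ← one_div, one_div_div, one_div_div, h3, h2, mul_one_div,
        div_self hq.ne']
  rw [hΨunion]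
  refine iSup_le fun u => iSup_le fun hu1 => ?_
  have hdpre : Pairwise (Function.onFun Disjoint fun j => φ ⁻¹' (B j)) :=
    fun i j hij => Disjoint.preimage φ (hdisj hij)
  have hsplit : ∫⁻ x in φ ⁻¹' (⋃ j, B j), G u x ∂μ
      = ∑' j, ∫⁻ x in φ ⁻¹' (B j), G u x ∂μ := by
    rw [Set.preimage_iUnion, lintegral_iUnion (fun j => hφ _ (hB j)) hdpre]
  set a : ℕ → ℝ≥0∞ := fun j => ∫⁻ y in B j, H u y ∂ν with ha
  -- Hölder for sums via the counting measure
  have hHolder : ∑' j, (Ψ (B j)) ^ (q / σ) * (a j) ^ (q / p)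
      ≤ (∑' j, Ψ (B j)) ^ (q / σ) * (∑' j, a j) ^ (q / p) := by
    have := ENNReal.lintegral_mul_le_Lp_mul_Lq (Measure.count : Measure ℕ) hconj
      (f := fun j => (Ψ (B j)) ^ (q / σ)) (g := fun j => (a j) ^ (q / p))
      (measurable_of_countable _).aemeasurable (measurable_of_countable _).aemeasurable
    simp only [lintegral_count] at this
    calc ∑' j, (Ψ (B j)) ^ (q / σ) * (a j) ^ (q / p)
        ≤ (∑' j, ((Ψ (B j)) ^ (q / σ)) ^ (σ / q)) ^ (1 / (σ / q))
          * (∑' j, ((a j) ^ (q / p)) ^ (p / q)) ^ (1 / (p / q)) := this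
      _ = (∑' j, Ψ (B j)) ^ (q / σ) * (∑' j, a j) ^ (q / p) := by
          have e1 : ∀ x : ℝ≥0∞, (x ^ (q / σ)) ^ (σ / q) = x := fun x => by
            rw [← ENNReal.rpow_mul, div_mul_div_comm, mul_comm,
              div_self (by positivity), ENNReal.rpow_one]
          have e2 : ∀ x : ℝ≥0∞, (x ^ (q / p)) ^ (p / q) = x := fun x => by
            rw [← ENNReal.rpow_mul, div_mul_div_comm, mul_comm,
              div_self (by positivity), ENNReal.rpow_one]
          simp only [e1, e2, one_div_div]
  have hsum1 : ∑' j, a j ≤ 1 := by rw [ha]; simpa [hadd u] using hu1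
  have key : ∫⁻ x in φ ⁻¹' (⋃ j, B j), G u x ∂μ ≤ (∑' j, Ψ (B j)) ^ (q / σ) := by
    rw [hsplit]
    calc ∑' j, ∫⁻ x in φ ⁻¹' (B j), G u x ∂μ
        ≤ ∑' j, (Ψ (B j)) ^ (q / σ) * (a j) ^ (q / p) :=
          ENNReal.tsum_le_tsum fun j => hbound u j
      _ ≤ (∑' j, Ψ (B j)) ^ (q / σ) * (∑' j, a j) ^ (q / p) := hHolder
      _ ≤ (∑' j, Ψ (B j)) ^ (q / σ) * 1 ^ (q / p) := by
          gcongr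
      _ = (∑' j, Ψ (B j)) ^ (q / σ) := by rw [ENNReal.one_rpow, mul_one]
  calc (∫⁻ x in φ ⁻¹' (⋃ j, B j), G u x ∂μ) ^ (σ / q)
      ≤ ((∑' j, Ψ (B j)) ^ (q / σ)) ^ (σ / q) := by
        gcongr
    _ = ∑' j, Ψ (B j) := by
        rw [← ENNReal.rpow_mul, div_mul_div_comm, mul_comm,
          div_self (by positivity), ENNReal.rpow_one]
end

section
/- Let (Y, Σ, ν) be a measure space, w ∈ L¹(Y, ν) nonnegative, and define a measure Ψ̃(B) = ∫_B w dν. Let G : Σ → [0, ∞] be a set function satisfying G(B) ≤ Ψ̃(B)^{q/σ} · ν(B)^{q/p} for all B ∈ Σ, where q < p and 1/σ = 1/q − 1/p. Suppose moreover G(B) = ∫_B g dν for a nonnegative measurable g. Then g(y) ≤ w(y)^{q/σ} ν-a.e., i.e. g^{σ/q} ≤ w a.e. -/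
open MeasureTheory ENNReal

/-- Radon–Nikodym representation combined with the reverse Hölder inequality
gives the pointwise estimate on the density. -/
theorem pointwise_density_estimate {Y : Type*} [MeasurableSpace Y] (ν : Measure Y)
    (q p σ : ℝ) (hq : 0 < q) (hqp : q < p) (hσ : 1 / σ = 1 / q - 1 / p)
    (w : Y → ℝ≥0∞) (hw : Measurable w) (hwL1 : ∫⁻ y, w y ∂ν ≠ ⊤)
    (g : Y → ℝ≥0∞) (hg : Measurable g)
    (hG : ∀ B : Set Y, MeasurableSet B →
      ∫⁻ y in B, g y ∂ν ≤ (∫⁻ y in B, w y ∂ν) ^ (q / σ) * (ν B) ^ (q / p)) :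
    ∀ᵐ y ∂ν, g y ≤ (w y) ^ (q / σ) := by
  classical
  have hp : 0 < p := hq.trans hqp
  have hθ : q / σ = 1 - q / p := by
    rw [div_eq_mul_inv, ← one_div, hσ]
    field_simp
  have hθ0 : 0 < q / σ := by
    rw [hθ]
    have : q / p < 1 := (div_lt_one hp).mpr hqp
    linarith
  set θ := q / σ with hθdef
  have hsum : θ + q / p = 1 := by rw [hθ]; ring
  -- Key claim: measurable sets on which `w < r` and `s < g`, with `r ^ θ < s`, are null.
  have key : ∀ r s : ℝ≥0∞, r ^ θ < s → ∀ B : Set Y, MeasurableSet B →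
      (∀ y ∈ B, w y < r ∧ s < g y) → ν B = 0 := by
    intro r s hrs B hB hBsub
    have hs0 : s ≠ 0 := by
      intro h
      rw [h] at hrs
      exact (not_lt_of_ge (zero_le)) hrs
    -- finite-measure subsets are null
    have fin : ∀ B' : Set Y, MeasurableSet B' → B' ⊆ B → ν B' ≠ ∞ → ν B' = 0 := by
      intro B' hB' hsub hfin
      by_contra h0
      have h1 : s * ν B' ≤ ∫⁻ y in B', g y ∂ν := by
        rw [← setLIntegral_const]
        exact setLIntegral_mono hg (fun y hy => ((hBsub y (hsub hy)).2).le)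
      have h2 : ∫⁻ y in B', w y ∂ν ≤ r * ν B' := by
        rw [← setLIntegral_const]
        exact setLIntegral_mono measurable_const (fun y hy => ((hBsub y (hsub hy)).1).le)
      have h4 : (∫⁻ y in B', w y ∂ν) ^ θ ≤ r ^ θ * (ν B') ^ θ := by
        calc (∫⁻ y in B', w y ∂ν) ^ θ ≤ (r * ν B') ^ θ :=
              ENNReal.rpow_le_rpow h2 hθ0.le
          _ = r ^ θ * (ν B') ^ θ := ENNReal.mul_rpow_of_nonneg _ _ hθ0.le
      have h5 : s * ν B' ≤ r ^ θ * ν B' := by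
        calc s * ν B' ≤ (∫⁻ y in B', w y ∂ν) ^ θ * (ν B') ^ (q / p) :=
              h1.trans (hG B' hB')
          _ ≤ r ^ θ * (ν B') ^ θ * (ν B') ^ (q / p) := mul_le_mul_left h4 _
          _ = r ^ θ * ((ν B') ^ θ * (ν B') ^ (q / p)) := mul_assoc _ _ _
          _ = r ^ θ * ν B' := by
              rw [← ENNReal.rpow_add _ _ h0 hfin, hsum, ENNReal.rpow_one]
      have : s ≤ r ^ θ := (ENNReal.mul_le_mul_iff_left h0 hfin).mp h5
      exact absurd this (not_le.mpr hrs)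
    -- the part where w = 0 is null
    have h0set : ν (B ∩ {y | w y = 0}) = 0 := by
      set B0 := B ∩ {y | w y = 0} with hB0def
      have hB0 : MeasurableSet B0 := hB.inter (hw (measurableSet_singleton 0))
      have hw0 : ∫⁻ y in B0, w y ∂ν = 0 := by
        refine le_antisymm ?_ (zero_le)
        calc ∫⁻ y in B0, w y ∂ν ≤ ∫⁻ _ in B0, 0 ∂ν :=
              setLIntegral_mono measurable_const (fun y hy => le_of_eq hy.2)
          _ = 0 := by simp
      have hle := hG B0 hB0
      rw [hw0, ENNReal.zero_rpow_of_pos hθ0, zero_mul] at hle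
      have h1 : s * ν B0 ≤ 0 := by
        refine le_trans ?_ hle
        rw [← setLIntegral_const]
        exact setLIntegral_mono hg (fun y hy => ((hBsub y hy.1).2).le)
      rcases mul_eq_zero.mp (le_antisymm h1 (zero_le)) with h | h
      · exact absurd h hs0
      · exact h
    -- the parts where w ≥ 1/(n+1) are null (finite measure by Markov)
    have hnset : ∀ n : ℕ, ν (B ∩ {y | ((n : ℝ≥0∞) + 1)⁻¹ ≤ w y}) = 0 := by
      intro n
      have hc0 : ((n : ℝ≥0∞) + 1)⁻¹ ≠ 0 := by
        simp [ENNReal.inv_ne_zero]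
      have hctop : ((n : ℝ≥0∞) + 1)⁻¹ ≠ ∞ := by
        simp
      have hmarkov : ν {y | ((n : ℝ≥0∞) + 1)⁻¹ ≤ w y} ≠ ∞ := by
        refine ne_top_of_le_ne_top ?_
          (meas_ge_le_lintegral_div hw.aemeasurable hc0 hctop)
        exact (ENNReal.div_lt_top hwL1 hc0).ne
      refine fin _ (hB.inter (measurableSet_le measurable_const hw))
        Set.inter_subset_left ?_
      exact ne_top_of_le_ne_top hmarkov (measure_mono Set.inter_subset_right)
    -- combine
    have hcover : B ⊆ (B ∩ {y | w y = 0}) ∪ ⋃ n : ℕ, B ∩ {y | ((n : ℝ≥0∞) + 1)⁻¹ ≤ w y} := by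
      intro y hy
      rcases eq_or_ne (w y) 0 with h | h
      · exact Or.inl ⟨hy, h⟩
      · obtain ⟨n, hn⟩ := ENNReal.exists_inv_nat_lt h
        refine Or.inr (Set.mem_iUnion.mpr ⟨n, hy, ?_⟩)
        refine le_trans ?_ hn.le
        exact ENNReal.inv_le_inv.mpr (by simp)
    refine measure_mono_null hcover ?_
    rw [measure_union_null_iff]
    exact ⟨h0set, measure_iUnion_null hnset⟩
  -- assemble the bad sets indexed by pairs of rationals
  let C : ℚ × ℚ → Set Y := fun rs =>
    if ((Real.toNNReal rs.1 : ℝ≥0∞)) ^ θ < (Real.toNNReal rs.2 : ℝ≥0∞) then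
      {y | w y < (Real.toNNReal rs.1 : ℝ≥0∞) ∧ (Real.toNNReal rs.2 : ℝ≥0∞) < g y}
    else ∅
  have hC : ∀ rs : ℚ × ℚ, ν (C rs) = 0 := by
    intro rs
    simp only [C]
    split_ifs with h
    · exact key _ _ h _
        ((hw measurableSet_Iio).inter (hg measurableSet_Ioi))
        (fun y hy => hy)
    · simp
  have hnull : ν (⋃ rs, C rs) = 0 := measure_iUnion_null hC
  filter_upwards [measure_eq_zero_iff_ae_notMem.mp hnull] with y hy
  by_contra hcon
  push_neg at hcon
  obtain ⟨s, _, hs1, hs2⟩ := ENNReal.lt_iff_exists_rat_btwn.mp hcon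
  have hwy : w y < ((Real.toNNReal s : ℝ≥0∞)) ^ (1 / θ) := by
    have := ENNReal.rpow_lt_rpow hs1 (by positivity : (0:ℝ) < 1 / θ)
    rwa [← ENNReal.rpow_mul, mul_one_div_cancel hθ0.ne', ENNReal.rpow_one] at this
  obtain ⟨r, _, hr1, hr2⟩ := ENNReal.lt_iff_exists_rat_btwn.mp hwy
  have hrθ : ((Real.toNNReal r : ℝ≥0∞)) ^ θ < (Real.toNNReal s : ℝ≥0∞) := by
    have := ENNReal.rpow_lt_rpow hr2 hθ0
    rwa [← ENNReal.rpow_mul, one_div_mul_cancel hθ0.ne', ENNReal.rpow_one] at this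
  refine hy (Set.mem_iUnion.mpr ⟨(r, s), ?_⟩)
  simp only [C, if_pos hrθ]
  exact ⟨hr1, hs2⟩
end
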